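/- arXiv:1904.12256 — 6 statements merged into one kernel-verified Lean document; each statement's English description precedes it below -/
import Mathlib

section
/- For an [n,k] linear code C over a finite field with k > 0, the generalized Hamming weights satisfy the strict monotonicity chain 1 ≤ d₁(C) < d₂(C) < ⋯ < d_k(C) ≤ n. -/
/-!
Removing a coordinate `i` from the support of a subcode `D` of dimension `l + 1` (by intersecting
`D` with the hyperplane `xᵢ = 0`) produces a subcode of dimension `l` whose support is strictly
smaller. Applied to a minimiser for `d_{l+1}`, this gives `d_l < d_{l+1}`.
-/

/-- The support of a subcode. -/
def codeSupport {F : Type*} [Field F] {n : ℕ} (D : Submodule F (Fin n → F)) : Set (Fin n) :=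
  {i | ∃ x ∈ D, x i ≠ 0}

/-- The `l`-th generalized Hamming weight of a linear code `C ⊆ F^n`: the minimum support
size of an `l`-dimensional subcode. -/
noncomputable def ghw {F : Type*} [Field F] {n : ℕ} (C : Submodule F (Fin n → F)) (l : ℕ) : ℕ :=
  sInf {k | ∃ D : Submodule F (Fin n → F), D ≤ C ∧ Module.finrank F D = l ∧
    (codeSupport D).ncard = k}

open Module

theorem Submodule.exists_le_finrank_eq {K V : Type*} [DivisionRing K] [AddCommGroup V]
    [Module K V] (C : Submodule K V) {m : ℕ} (hm : m ≤ finrank K C) :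
    ∃ D : Submodule K V, D ≤ C ∧ finrank K D = m := by
  obtain ⟨f, hf⟩ := exists_linearIndependent_of_le_finrank hm
  refine ⟨(span K (Set.range f)).map C.subtype, map_subtype_le _ _, ?_⟩
  rw [finrank_map_subtype_eq, finrank_span_eq_card hf, Fintype.card_fin]

section codeSupport

variable {F : Type*} [Field F] {n : ℕ}

theorem codeSupport_nonempty {D : Submodule F (Fin n → F)} (hD : D ≠ ⊥) :
    (codeSupport D).Nonempty := by
  obtain ⟨x, hxD, hx⟩ := Submodule.exists_mem_ne_zero_of_ne_bot hD
  obtain ⟨i, hi⟩ := Function.ne_iff.mp hx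
  exact ⟨i, x, hxD, hi⟩

theorem ncard_codeSupport_le (D : Submodule F (Fin n → F)) : (codeSupport D).ncard ≤ n :=
  (Set.ncard_le_card _).trans_eq (Nat.card_eq_fintype_card.trans (Fintype.card_fin n))

theorem exists_finrank_add_one_codeSupport_subset_diff {D : Submodule F (Fin n → F)} {i : Fin n}
    (hi : i ∈ codeSupport D) :
    ∃ D' : Submodule F (Fin n → F), D' ≤ D ∧ finrank F D' + 1 = finrank F D ∧
      codeSupport D' ⊆ codeSupport D \ {i} := by
  obtain ⟨x, hxD, hxi⟩ := hi
  let evalAt : Dual F D := (LinearMap.proj i).comp D.subtype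
  have hne : evalAt ≠ 0 := fun h ↦ hxi (LinearMap.congr_fun h ⟨x, hxD⟩)
  refine ⟨(LinearMap.ker evalAt).map D.subtype, Submodule.map_subtype_le _ _, ?_, ?_⟩
  · rw [Submodule.finrank_map_subtype_eq, Dual.finrank_ker_add_one_of_ne_zero hne]
  · rintro j ⟨_, ⟨y, hy, rfl⟩, hyj⟩
    exact ⟨⟨y, y.2, hyj⟩, fun hji : j = i ↦ hyj (hji ▸ hy)⟩

end codeSupport

section ghw

variable {F : Type*} [Field F] {n : ℕ} {C : Submodule F (Fin n → F)}

theorem ghw_le_ncard_codeSupport {D : Submodule F (Fin n → F)} (hD : D ≤ C) :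
    ghw C (finrank F D) ≤ (codeSupport D).ncard :=
  Nat.sInf_le ⟨D, hD, rfl, rfl⟩

theorem exists_ncard_codeSupport_eq_ghw {l : ℕ} (hl : l ≤ finrank F C) :
    ∃ D : Submodule F (Fin n → F), D ≤ C ∧ finrank F D = l ∧ (codeSupport D).ncard = ghw C l := by
  obtain ⟨D, hDC, hDl⟩ := C.exists_le_finrank_eq hl
  exact Nat.sInf_mem (s := {k | ∃ D : Submodule F (Fin n → F), D ≤ C ∧ finrank F D = l ∧
    (codeSupport D).ncard = k}) ⟨_, D, hDC, hDl, rfl⟩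

theorem one_le_ghw_one (hk : 0 < finrank F C) : 1 ≤ ghw C 1 := by
  obtain ⟨D, -, hD1, hcard⟩ := exists_ncard_codeSupport_eq_ghw hk
  have hD : D ≠ ⊥ := Submodule.one_le_finrank_iff.mp hD1.ge
  rw [← hcard]
  exact (Set.ncard_pos (Set.toFinite _)).mpr (codeSupport_nonempty hD)

theorem ghw_lt_ghw_succ {l : ℕ} (hl : l + 1 ≤ finrank F C) : ghw C l < ghw C (l + 1) := by
  obtain ⟨D, hDC, hDl, hcard⟩ := exists_ncard_codeSupport_eq_ghw hl
  have hD : D ≠ ⊥ := Submodule.one_le_finrank_iff.mp (by omega)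
  obtain ⟨i, hi⟩ := codeSupport_nonempty hD
  obtain ⟨D', hD'D, hD'rank, hD'supp⟩ := exists_finrank_add_one_codeSupport_subset_diff hi
  calc ghw C l = ghw C (finrank F D') := by rw [show finrank F D' = l by omega]
    _ ≤ (codeSupport D').ncard := ghw_le_ncard_codeSupport (hD'D.trans hDC)
    _ ≤ (codeSupport D \ {i}).ncard := Set.ncard_le_ncard hD'supp (Set.toFinite _)
    _ < (codeSupport D).ncard := Set.ncard_sdiff_singleton_lt_of_mem hi (Set.toFinite _)
    _ = ghw C (l + 1) := hcard

end ghw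

theorem ghw_strict_mono_general {F : Type*} [Field F] {n : ℕ}
    (C : Submodule F (Fin n → F)) (hk : 0 < Module.finrank F C) :
    1 ≤ ghw C 1 ∧
      (∀ l : ℕ, 1 ≤ l → l + 1 ≤ Module.finrank F C → ghw C l < ghw C (l + 1)) ∧
      ghw C (Module.finrank F C) ≤ n :=
  ⟨one_le_ghw_one hk, fun _ _ hl ↦ ghw_lt_ghw_succ hl,
    (ghw_le_ncard_codeSupport le_rfl).trans (ncard_codeSupport_le C)⟩

/-- For an `[n, k]` linear code `C` over a finite field with `k > 0`, the generalized Hamming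
weights satisfy `1 ≤ d₁(C) < d₂(C) < ⋯ < d_k(C) ≤ n`. -/
theorem ghw_strict_mono {F : Type*} [Field F] [Fintype F] {n : ℕ}
    (C : Submodule F (Fin n → F)) (hk : 0 < Module.finrank F C) :
    1 ≤ ghw C 1 ∧
      (∀ l : ℕ, 1 ≤ l → l + 1 ≤ Module.finrank F C → ghw C l < ghw C (l + 1)) ∧
      ghw C (Module.finrank F C) ≤ n :=
  ghw_strict_mono_general C hk
end

section
/- Let C ⊆ F^n be a linear code with parity check matrix H having columns h₁,…,h_n. Then for each l with 1 ≤ l ≤ dim C, d_l(C) = min{ |I| : I ⊆ {1,…,n}, |I| − rank(span{h_i : i ∈ I}) ≥ l }. -/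
/-! Let `V_I` be the coordinate subspace of vectors supported on `I`. Rank–nullity for `H`
restricted to `V_I` gives `dim (C ⊓ V_I) = |I| - rank ⟨h_i : i ∈ I⟩`, and a subcode of `C` is
supported on `I` exactly when it lies in `C ⊓ V_I`. Hence an `l`-dimensional subcode supported
on `I` exists iff `|I| - rank ⟨h_i : i ∈ I⟩ ≥ l`, and the two minima coincide. -/

open Module Submodule

namespace Submodule

theorem exists_le_finrank_eq_s7 {K M : Type*} [DivisionRing K] [AddCommGroup M] [Module K M]
    (W : Submodule K M) {l : ℕ} (h : l ≤ finrank K W) :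
    ∃ D ≤ W, finrank K D = l := by
  obtain ⟨f, hf⟩ := exists_linearIndependent_of_le_finrank h
  refine ⟨span K (Set.range (W.subtype ∘ f)), ?_, ?_⟩
  · rw [span_le]
    rintro _ ⟨i, rfl⟩
    exact (f i).2
  · rw [finrank_span_eq_card (hf.map' W.subtype W.ker_subtype), Fintype.card_fin]

theorem finrank_map_add_finrank_inf_ker {K V V₂ : Type*} [DivisionRing K]
    [AddCommGroup V] [Module K V] [AddCommGroup V₂] [Module K V₂]
    (f : V →ₗ[K] V₂) (W : Submodule K V) [FiniteDimensional K W] :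
    finrank K (W.map f) + finrank K (W ⊓ LinearMap.ker f : Submodule K V) = finrank K W := by
  have hker : finrank K (LinearMap.ker (f.domRestrict W)) =
      finrank K (W ⊓ LinearMap.ker f : Submodule K V) := by
    rw [LinearMap.ker_domRestrict, ← map_comap_subtype]
    exact (equivMapOfInjective _ W.injective_subtype _).finrank_eq
  rw [← hker, ← LinearMap.range_domRestrict]
  exact (f.domRestrict W).finrank_range_add_finrank_ker

end Submodule

def coordSubspace (F : Type*) {ι : Type*} [Field F] [Finite ι] [DecidableEq ι] (I : Set ι) :
    Submodule F (ι → F) :=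
  span F (Pi.basisFun F ι '' I)

section
variable {F ι : Type*} [Field F] [Fintype ι] [DecidableEq ι]

theorem mem_coordSubspace {I : Set ι} {x : ι → F} :
    x ∈ coordSubspace F I ↔ ∀ i ∉ I, x i = 0 := by
  rw [coordSubspace, Basis.mem_span_image]
  simp [Set.subset_def, not_imp_comm]

theorem coordSubspace_univ : coordSubspace F (Set.univ : Set ι) = ⊤ := by
  rw [coordSubspace, Set.image_univ, Basis.span_eq]

theorem finrank_coordSubspace (I : Finset ι) :
    finrank F (coordSubspace F (I : Set ι)) = I.card := by
  rw [coordSubspace, Set.image_eq_range]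
  exact (finrank_span_eq_card
    ((Pi.basisFun F ι).linearIndependent.comp _ Subtype.val_injective)).trans (by simp)

theorem Matrix.map_coordSubspace {m : Type*} (H : Matrix m ι F) (I : Set ι) :
    (coordSubspace F I).map H.mulVecLin = span F (H.transpose '' I) := by
  rw [coordSubspace, map_span, ← Set.image_comp]
  congr 1
  exact Set.image_congr fun i _ => by simp [H.mulVec_single_one]; rfl

theorem finrank_span_transpose_add_finrank_coordSubspace_inf_ker {m : Type*}
    (H : Matrix m ι F) (I : Finset ι) :
    finrank F (span F (H.transpose '' (I : Set ι))) +
      finrank F (coordSubspace F (I : Set ι) ⊓ LinearMap.ker H.mulVecLin :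
        Submodule F (ι → F)) = I.card := by
  rw [← H.map_coordSubspace, finrank_map_add_finrank_inf_ker, finrank_coordSubspace]

end

section
variable {F : Type*} [Field F] {n : ℕ}

theorem codeSupport_subset_iff_le_coordSubspace {D : Submodule F (Fin n → F)}
    {I : Set (Fin n)} :
    codeSupport D ⊆ I ↔ D ≤ coordSubspace F I := by
  simp only [codeSupport, Set.ofPred_subset, SetLike.le_def, mem_coordSubspace]
  grind

theorem ghw_le_card_of_le_finrank_coordSubspace_inf {C : Submodule F (Fin n → F)} {l : ℕ}
    {I : Finset (Fin n)}
    (h : l ≤ finrank F (coordSubspace F (I : Set (Fin n)) ⊓ C : Submodule F _)) :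
    ghw C l ≤ I.card := by
  obtain ⟨D, hD, rfl⟩ := exists_le_finrank_eq_s7 _ h
  calc ghw C (finrank F D) ≤ (codeSupport D).ncard :=
        Nat.sInf_le ⟨D, hD.trans inf_le_right, rfl, rfl⟩
    _ ≤ I.card := by
      rw [← Set.ncard_coe_finset]
      exact Set.ncard_le_ncard (codeSupport_subset_iff_le_coordSubspace.2 (hD.trans inf_le_left))

end

theorem ghw_eq_min_card_dependent_columns_general {F : Type*} [Field F] {m₀ n : ℕ}
    (H : Matrix (Fin m₀) (Fin n) F) :
    ∀ l : ℕ, 1 ≤ l → l ≤ Module.finrank F (LinearMap.ker H.mulVecLin) →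
      ghw (LinearMap.ker H.mulVecLin) l =
        sInf {k | ∃ I : Finset (Fin n), I.card = k ∧
          Module.finrank F (Submodule.span F (H.transpose '' (I : Set (Fin n)))) + l ≤ I.card} := by
  classical
  intro l _ hl
  have hdim := finrank_span_transpose_add_finrank_coordSubspace_inf_ker H
  apply le_antisymm
  · have hfull := hdim Finset.univ
    rw [Finset.coe_univ, coordSubspace_univ, top_inf_eq] at hfull
    refine le_csInf ⟨_, Finset.univ, rfl, by rw [Finset.coe_univ]; omega⟩ ?_
    rintro _ ⟨I, rfl, hI⟩
    exact ghw_le_card_of_le_finrank_coordSubspace_inf (by have := hdim I; omega)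
  · obtain ⟨D₀, hD₀, hD₀l⟩ := exists_le_finrank_eq_s7 _ hl
    refine le_csInf ⟨_, D₀, hD₀, hD₀l, rfl⟩ ?_
    rintro _ ⟨D, hDC, rfl, rfl⟩
    refine Nat.sInf_le ⟨(codeSupport D).toFinset, (Set.ncard_eq_toFinset_card' _).symm, ?_⟩
    have hD : D ≤ coordSubspace F ((codeSupport D).toFinset : Set (Fin n)) ⊓
        LinearMap.ker H.mulVecLin :=
      le_inf (codeSupport_subset_iff_le_coordSubspace.1 (by simp)) hDC
    have := hdim (codeSupport D).toFinset
    have := finrank_mono hD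
    omega

/-- Wei's duality description: if `C = ker H` for a parity check matrix `H` with columns
`h₁, …, h_n`, then `d_l(C) = min { |I| : |I| - rank ⟨h_i : i ∈ I⟩ ≥ l }`. -/
theorem ghw_eq_min_card_dependent_columns {F : Type*} [Field F] [Fintype F] {m₀ n : ℕ}
    (H : Matrix (Fin m₀) (Fin n) F) :
    ∀ l : ℕ, 1 ≤ l → l ≤ Module.finrank F (LinearMap.ker H.mulVecLin) →
      ghw (LinearMap.ker H.mulVecLin) l =
        sInf {k | ∃ I : Finset (Fin n), I.card = k ∧
          Module.finrank F (Submodule.span F (H.transpose '' (I : Set (Fin n)))) + l ≤ I.card} :=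
  ghw_eq_min_card_dependent_columns_general H
end

section
/- Let H = [Hᵢⱼ] (i,j = 1,…,γ) be a block matrix over a field where Hᵢⱼ = αⱼ^{i−1} Bᵢⱼ, Bᵢⱼ is the wᵢ × wⱼ matrix with (s,t)-entry β_{j,t}^{s−1}, the αⱼ are pairwise distinct, and for each j the elements β_{j,1},…,β_{j,wⱼ} are pairwise distinct, with w₁ ≥ w₂ ≥ ⋯ ≥ w_γ ≥ 1. Then det(H) = (∏_{i=1}^{γ} det(B_{i,i})) · (∏_{j=2}^{γ} ρⱼ^{wⱼ}) where ρⱼ = ∏_{i=1}^{j−1}(αⱼ − αᵢ); in particular H is invertible. -/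
/-!
Subtracting `α₁` times block row `i - 1` from block row `i` (row `s` of block `i - 1` exists
because `w` is decreasing) is a unipotent row operation. It clears the first block column below
the diagonal block `B₁₁`, and what remains in the lower right is the block Vandermonde matrix of
`α₂, …, α_γ` with column `(j, t)` scaled by `αⱼ - α₁`. Induction on `γ` gives the formula,
and every factor is nonzero.
-/

open Finset Matrix

def sigmaFinSuccEquiv {n : ℕ} (π : Fin (n + 1) → Type*) :
    ((j : Fin (n + 1)) × π j) ≃ π 0 ⊕ ((j : Fin n) × π j.succ) where
  toFun x := Fin.cases (motive := fun j => π j → π 0 ⊕ ((j : Fin n) × π j.succ))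
    Sum.inl (fun j s => Sum.inr ⟨j, s⟩) x.1 x.2
  invFun := Sum.elim (fun s => ⟨0, s⟩) (fun p => ⟨p.1.succ, p.2⟩)
  left_inv := by rintro ⟨j, s⟩; induction j using Fin.cases <;> simp
  right_inv := by rintro (s | ⟨j, s⟩) <;> simp

@[simp] lemma sigmaFinSuccEquiv_symm_inl {n : ℕ} (π : Fin (n + 1) → Type*) (s : π 0) :
    (sigmaFinSuccEquiv π).symm (Sum.inl s) = ⟨0, s⟩ := rfl

@[simp] lemma sigmaFinSuccEquiv_symm_inr {n : ℕ} (π : Fin (n + 1) → Type*)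
    (p : (j : Fin n) × π j.succ) :
    (sigmaFinSuccEquiv π).symm (Sum.inr p) = ⟨p.1.succ, p.2⟩ := rfl

lemma Fin.prod_filter_lt_succ {n : ℕ} {M : Type*} [CommMonoid M] (f : Fin (n + 1) → M)
    (j : Fin n) :
    ∏ i ∈ univ.filter (· < j.succ), f i = f 0 * ∏ i ∈ univ.filter (· < j), f i.succ := by
  simp [prod_filter, Fin.prod_univ_succ, Fin.succ_pos]

theorem Matrix.det_one_add_of_strictLowerBlockTriangular {m α R : Type*} [Fintype m]
    [DecidableEq m] [LinearOrder α] [CommRing R] (b : m → α) (N : Matrix m m R)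
    (hN : ∀ i j, b i ≤ b j → N i j = 0) : (1 + N).det = 1 := by
  have htri : (1 + N).BlockTriangular (OrderDual.toDual ∘ b) := fun i j hij => by
    have hne : i ≠ j := by rintro rfl; exact lt_irrefl _ hij
    simp [one_apply_ne hne, hN i j hij.le]
  rw [htri.det]
  refine prod_eq_one fun a _ => ?_
  have : (1 + N).toSquareBlock (OrderDual.toDual ∘ b) a = 1 := by
    ext ⟨i, hi⟩ ⟨j, hj⟩
    have hij : b i ≤ b j := (OrderDual.toDual.injective (hi.trans hj.symm)).le
    simp [toSquareBlock_def, one_apply, hN i j hij]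
  rw [this, det_one]

section BlockShift

variable {R : Type*} [Semiring R] {n : ℕ}

variable (R) in
def blockShift (w : Fin n → ℕ) :
    Matrix ((j : Fin n) × Fin (w j)) ((j : Fin n) × Fin (w j)) R :=
  of fun r r' => if (r'.1 : ℕ) + 1 = r.1 ∧ (r'.2 : ℕ) = r.2 then 1 else 0

lemma blockShift_apply_of_le {w : Fin n → ℕ} {r r' : (j : Fin n) × Fin (w j)}
    (h : r.1 ≤ r'.1) :
    blockShift R w r r' = 0 := by
  rw [Fin.le_def] at h
  simp only [blockShift, of_apply]
  exact if_neg (by omega)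

lemma blockShift_mul_apply_zero {w : Fin (n + 1) → ℕ} {κ : Type*}
    (M : Matrix ((j : Fin (n + 1)) × Fin (w j)) κ R) (s : Fin (w 0)) (c : κ) :
    (blockShift R w * M) ⟨0, s⟩ c = 0 :=
  sum_eq_zero fun _ _ => mul_eq_zero_of_left (blockShift_apply_of_le (Fin.zero_le _)) _

lemma blockShift_mul_apply_succ {w : Fin (n + 1) → ℕ} (hw : Antitone w) {κ : Type*}
    (M : Matrix ((j : Fin (n + 1)) × Fin (w j)) κ R) (i : Fin n) (s : Fin (w i.succ)) (c : κ) :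
    (blockShift R w * M) ⟨i.succ, s⟩ c =
      M ⟨i.castSucc, Fin.castLE (hw (Fin.castSucc_le_succ i)) s⟩ c := by
  rw [mul_apply, sum_eq_single ⟨i.castSucc, Fin.castLE (hw (Fin.castSucc_le_succ i)) s⟩]
  · simp [blockShift]
  · rintro ⟨j, t⟩ _ hne
    refine mul_eq_zero_of_left (if_neg ?_) _
    rintro ⟨hj, ht⟩
    obtain rfl : j = i.castSucc := Fin.ext (by simp at hj ⊢; omega)
    exact hne (by simpa [Fin.ext_iff] using ht)
  · simp

end BlockShift

section BlockVandermonde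

variable {R : Type*} [CommRing R] {n : ℕ}

def blockVandermonde {w : Fin n → ℕ} (α : Fin n → R) (β : (j : Fin n) → Fin (w j) → R) :
    Matrix ((j : Fin n) × Fin (w j)) ((j : Fin n) × Fin (w j)) R :=
  of fun r c => α c.1 ^ (r.1 : ℕ) * β c.1 c.2 ^ (r.2 : ℕ)

lemma blockVandermonde_rowReduce {w : Fin (n + 1) → ℕ} (hw : Antitone w)
    (α : Fin (n + 1) → R) (β : (j : Fin (n + 1)) → Fin (w j) → R) :
    letI e := sigmaFinSuccEquiv fun j => Fin (w j)
    ((1 - α 0 • blockShift R w) * blockVandermonde α β).submatrix e.symm e.symm =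
      fromBlocks (vandermonde (β 0))ᵀ (of fun s q => β q.1.succ q.2 ^ (s : ℕ)) 0
        (blockVandermonde (fun j => α j.succ) (fun j => β j.succ) *
          diagonal fun q => α q.1.succ - α 0) := by
  ext (s | ⟨i, s⟩) (t | ⟨j, t⟩) <;>
    simp [sub_mul, blockShift_mul_apply_zero, blockShift_mul_apply_succ hw,
      blockVandermonde, vandermonde, pow_succ] <;> ring

theorem det_blockVandermonde {w : Fin n → ℕ} (hw : Antitone w) (α : Fin n → R) (β : (j : Fin n) → Fin (w j) → R) :
    (blockVandermonde α β).det =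
      (∏ i, (vandermonde (β i)).det) *
        ∏ j, (∏ i ∈ univ.filter (· < j), (α j - α i)) ^ w j := by
  induction n with
  | zero => simp
  | succ n ih =>
    have hdetE : (1 - α 0 • blockShift R w).det = 1 := by
      rw [sub_eq_add_neg]
      exact det_one_add_of_strictLowerBlockTriangular Sigma.fst _ fun r r' h => by
        simp [blockShift_apply_of_le h]
    let α' := fun j : Fin n => α j.succ
    let β' := fun j : Fin n => β j.succ
    calc (blockVandermonde α β).det
        = ((1 - α 0 • blockShift R w) * blockVandermonde α β).det := by
          rw [det_mul, hdetE, one_mul]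
      _ = (vandermonde (β 0)).det *
            ((blockVandermonde α' β').det * ∏ j : Fin n, (α j.succ - α 0) ^ w j.succ) := by
          rw [← det_submatrix_equiv_self (sigmaFinSuccEquiv fun j => Fin (w j)).symm,
            blockVandermonde_rowReduce hw, det_fromBlocks_zero₂₁, det_transpose, det_mul,
            det_diagonal, ← univ_sigma_univ, prod_sigma]
          simp [α', β']
      _ = _ := by
          rw [ih (hw.comp_monotone Fin.strictMono_succ.monotone)]
          simp [α', β', Fin.prod_univ_succ, Fin.prod_filter_lt_succ, mul_pow, prod_mul_distrib]
          ring

end BlockVandermonde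

open Finset in
theorem block_vandermonde_det_general {F : Type*} [Field F] (γ : ℕ) (w : Fin γ → ℕ)
    (hw : ∀ i j : Fin γ, i ≤ j → w j ≤ w i)
    (α : Fin γ → F) (hα : Function.Injective α)
    (β : (j : Fin γ) → Fin (w j) → F) (hβ : ∀ j, Function.Injective (β j))
    (H : Matrix ((j : Fin γ) × Fin (w j)) ((j : Fin γ) × Fin (w j)) F)
    (hH : ∀ r c : (j : Fin γ) × Fin (w j),
      H r c = α c.1 ^ (r.1 : ℕ) * β c.1 c.2 ^ (r.2 : ℕ)) :
    H.det =
      (∏ i : Fin γ, (Matrix.of fun s t : Fin (w i) => β i t ^ (s : ℕ)).det) *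
        ∏ j : Fin γ, (∏ i ∈ Finset.univ.filter (· < j), (α j - α i)) ^ (w j) ∧
      IsUnit H.det := by
  have hB (i : Fin γ) : (Matrix.of fun s t : Fin (w i) => β i t ^ (s : ℕ)).det =
      (vandermonde (β i)).det := det_transpose _
  obtain rfl : H = blockVandermonde α β := ext hH
  have hdet := det_blockVandermonde (fun i j h => hw i j h) α β
  simp only [hB]
  refine ⟨hdet, hdet ▸ (mul_ne_zero ?_ ?_).isUnit⟩
  · exact prod_ne_zero_iff.mpr fun i _ => det_vandermonde_ne_zero_iff.mpr (hβ i)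
  · refine prod_ne_zero_iff.mpr fun j _ => pow_ne_zero _ (prod_ne_zero_iff.mpr fun i hi => ?_)
    exact sub_ne_zero.mpr (hα.ne (mem_filter.mp hi).2.ne')

open Finset in
/-- Block Vandermonde determinant: for the block matrix `H = [H_{ij}]` with
`H_{ij} = α_j^{i-1} B_{ij}`, where `B_{ij}` is the `w_i × w_j` matrix with `(s,t)`-entry
`β_{j,t}^{s-1}`, the `α_j` pairwise distinct, each family `β_{j,•}` pairwise distinct and
`w₁ ≥ w₂ ≥ ⋯ ≥ w_γ ≥ 1`, one has
`det H = (∏ᵢ det B_{ii}) ⬝ ∏ⱼ ρⱼ^{wⱼ}` with `ρⱼ = ∏_{i<j} (αⱼ - αᵢ)`;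
in particular `H` is invertible. -/
theorem block_vandermonde_det {F : Type*} [Field F] (γ : ℕ) (w : Fin γ → ℕ)
    (hw : ∀ i j : Fin γ, i ≤ j → w j ≤ w i) (hw1 : ∀ i, 1 ≤ w i)
    (α : Fin γ → F) (hα : Function.Injective α)
    (β : (j : Fin γ) → Fin (w j) → F) (hβ : ∀ j, Function.Injective (β j))
    (H : Matrix ((j : Fin γ) × Fin (w j)) ((j : Fin γ) × Fin (w j)) F)
    (hH : ∀ r c : (j : Fin γ) × Fin (w j),
      H r c = α c.1 ^ (r.1 : ℕ) * β c.1 c.2 ^ (r.2 : ℕ)) :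
    H.det =
      (∏ i : Fin γ, (Matrix.of fun s t : Fin (w i) => β i t ^ (s : ℕ)).det) *
        ∏ j : Fin γ, (∏ i ∈ Finset.univ.filter (· < j), (α j - α i)) ^ (w j) ∧
      IsUnit H.det :=
  block_vandermonde_det_general γ w hw α hα β hβ H hH
end

section
/- Let A be a numerical semigroup with genus g = |ℕ∖A| and conductor c. Then for every x ∈ A with x ≥ c, the Feng–Rao distance satisfies δ_FR(x) ≥ x + 1 − 2g. -/
/-!
An element `a ≤ y` fails to be a divisor of `y` in `A` only if `a` or `y - a` is a gap of `A`.
Each of the `g` gaps accounts for at most two such `a`, so at least `y + 1 - 2g` of the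
`y + 1` numbers `0, …, y` are divisors of `y`; in particular this holds for every `y ≥ x`.
-/

open Set

namespace NumericalSemigroup

/-- `D(y)`; the conjunct `a ≤ y` guards against truncated subtraction in `y - a`. -/
def divisors (A : Set ℕ) (y : ℕ) : Set ℕ := {a | a ∈ A ∧ a ≤ y ∧ y - a ∈ A}

lemma divisors_subset_Iic (A : Set ℕ) (y : ℕ) : divisors A y ⊆ Iic y :=
  fun _ ha => ha.2.1

lemma Iic_diff_divisors_subset (A : Set ℕ) (y : ℕ) :
    Iic y \ divisors A y ⊆ Aᶜ ∪ (y - ·) '' Aᶜ := by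
  rintro a ⟨hay : a ≤ y, hnot⟩
  by_cases ha : a ∈ A
  · have hya : y - a ∉ A := fun h => hnot ⟨ha, hay, h⟩
    exact Or.inr ⟨y - a, hya, Nat.sub_sub_self hay⟩
  · exact Or.inl ha

lemma ncard_Iic_diff_divisors_le {A : Set ℕ} (hfin : Aᶜ.Finite) (y : ℕ) :
    (Iic y \ divisors A y).ncard ≤ 2 * Aᶜ.ncard :=
  calc (Iic y \ divisors A y).ncard
      ≤ (Aᶜ ∪ (y - ·) '' Aᶜ).ncard :=
        ncard_le_ncard (Iic_diff_divisors_subset A y) (hfin.union (hfin.image _))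
    _ ≤ Aᶜ.ncard + ((y - ·) '' Aᶜ).ncard := ncard_union_le _ _
    _ ≤ 2 * Aᶜ.ncard := by linarith [ncard_image_le (f := (y - ·)) hfin]

lemma le_ncard_divisors_add {A : Set ℕ} (hfin : Aᶜ.Finite) (y : ℕ) :
    y + 1 ≤ (divisors A y).ncard + 2 * Aᶜ.ncard := by
  have hsplit := ncard_sdiff_add_ncard_of_subset (divisors_subset_Iic A y) (finite_Iic y)
  rw [ncard_Iic_nat] at hsplit
  linarith [ncard_Iic_diff_divisors_le hfin y]

end NumericalSemigroup

open NumericalSemigroup in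
theorem fengRao_ge_general (A : Set ℕ)
    (hfin : (Aᶜ).Finite) (c : ℕ) :
    ∀ x ∈ A, c ≤ x →
      (x : ℤ) + 1 - 2 * (Set.ncard Aᶜ : ℤ) ≤
        ((sInf {k : ℕ | ∃ y ∈ A, x ≤ y ∧
          k = Set.ncard {a : ℕ | a ∈ A ∧ a ≤ y ∧ y - a ∈ A}} : ℕ) : ℤ) := by
  intro x hx _
  change _ ≤ ((sInf {k : ℕ | ∃ y ∈ A, x ≤ y ∧ k = (divisors A y).ncard} : ℕ) : ℤ)
  obtain ⟨y, -, hxy, hk⟩ := Nat.sInf_mem (⟨_, x, hx, le_rfl, rfl⟩ :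
    {k : ℕ | ∃ y ∈ A, x ≤ y ∧ k = (divisors A y).ncard}.Nonempty)
  have hy : y + 1 ≤ (divisors A y).ncard + 2 * Aᶜ.ncard := le_ncard_divisors_add hfin y
  rw [hk]
  omega

/-- For a numerical semigroup `A` with genus `g = |ℕ \ A|` and conductor `c`, the Feng–Rao
distance `δ_FR(x) = min { |D(m)| : m ∈ A, m ≥ x }`, where `D(m) = {a ∈ A : m - a ∈ A}`,
satisfies `δ_FR(x) ≥ x + 1 - 2g` for every `x ∈ A` with `x ≥ c`. -/
theorem fengRao_ge (A : Set ℕ) (h0 : 0 ∈ A) (hadd : ∀ a ∈ A, ∀ b ∈ A, a + b ∈ A)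
    (hfin : (Aᶜ).Finite) (c : ℕ)
    (hc1 : ∀ u : ℕ, c + u ∈ A) (hc2 : c = 0 ∨ c - 1 ∉ A) :
    ∀ x ∈ A, c ≤ x →
      (x : ℤ) + 1 - 2 * (Set.ncard Aᶜ : ℤ) ≤
        ((sInf {k : ℕ | ∃ y ∈ A, x ≤ y ∧
          k = Set.ncard {a : ℕ | a ∈ A ∧ a ≤ y ∧ y - a ∈ A}} : ℕ) : ℤ) :=
  fengRao_ge_general A hfin c
end

section
/- With notation as in the elementary abelian p-extension F = K(x,y), y^q + μy = f(x), deg f = m, the dual of the one-point code C_r = C_L(D, rQ_∞) is the coordinatewise scaling by ā of C_{2qm−q−m−1−r}, where ā^{-1} = (f'(x)(P) : P ∈ supp D): that is, C_r^⊥ = ā ⋆ C_{2qm−q−m−1−r}. -/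
/-- The one-point geometric Goppa code `C_r = C_L(D, rQ∞)` on the elementary abelian
`p`-extension `y^q + μy = f(x)`, realized concretely: `L(rQ∞)` has basis
`{xⁱyʲ : 0 ≤ i, 0 ≤ j ≤ q-1, iq + jm ≤ r}`, evaluated at the `qm` rational places
`P_{αᵢ,βⱼ}` (identified with the points `(αᵢ, βⱼ)`). -/
def onePointCode {K : Type*} [Field K] (q m : ℕ) (α : Fin m → K) (β : Fin q → K)
    (r : ℕ) : Submodule K (Fin m × Fin q → K) :=
  Submodule.span K {w : Fin m × Fin q → K |
    ∃ i j : ℕ, j ≤ q - 1 ∧ i * q + j * m ≤ r ∧ w = fun P => α P.1 ^ i * β P.2 ^ j}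

open Polynomial Module Finset Function

/-!
Write `λ_u = 1 / f'(α_u)` and `r' = 2qm - q - m - 1 - r`. The twisted pairing of the words of
`xᵃyᵇ` and `xⁱyʲ` factors as `(∑_u λ_u α_u^(a+i)) · (∑_v β_v^(b+j))`. The first factor is the
coefficient of `X^(m-1)` in the interpolant of `X^(a+i)`, so it vanishes for `a + i < m - 1`; the
`β_v` are all the roots of `T^q + μT`, whose derivative is the constant `μ`, so the same argument
kills the second factor for `b + j < q - 1`. If the pole orders of the two monomials add up to at
most `r + r'`, one of these inequalities holds, whence `ā ⋆ C_{r'} ⊆ C_r^⊥`.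

Equality is a dimension count: the words of `xⁱyʲ` with `i < m`, `j < q` are independent (their
matrix is a Kronecker product of Vandermonde matrices), and `(i, j) ↦ (m-1-i, q-1-j)` maps the
monomials of pole order `> r` to those of pole order `≤ r'`, so `dim C_r + dim C_{r'} ≥ qm`.
-/

namespace Lagrange

variable {F ι : Type*} [Field F] [DecidableEq ι] {s : Finset ι} {v : ι → F}

theorem sum_nodalWeight_mul_pow_eq_zero (hvs : Set.InjOn v s) {k : ℕ} (hk : k + 1 < #s) :
    ∑ i ∈ s, nodalWeight s v i * v i ^ k = 0 := by
  have hdeg : ((X : F[X]) ^ k).degree < #s := by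
    rw [degree_X_pow]
    exact_mod_cast (by omega : k < #s)
  have hcoeff := coeff_eq_sum hvs hdeg
  rw [coeff_X_pow, if_neg (by omega)] at hcoeff
  rw [hcoeff]
  refine sum_congr rfl fun i _ => ?_
  rw [nodalWeight, prod_inv_distrib, eval_pow, eval_X, div_eq_inv_mul]

end Lagrange

section AdditivePolynomial

variable {K : Type*} [Field K] {q : ℕ} {μ : K} {β : Fin q → K}

open Lagrange

theorem nodal_eq_X_pow_add_C_mul_X (hq : 2 ≤ q) (hβ : Injective β)
    (hroot : ∀ j, β j ^ q + μ * β j = 0) : nodal univ β = X ^ q + C μ * X := by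
  have hlt : (C μ * X : K[X]).degree < (X ^ q : K[X]).degree := by
    rw [degree_X_pow]
    exact (degree_C_mul_X_le μ).trans_lt (by exact_mod_cast hq)
  refine eq_of_degree_le_of_eval_index_eq univ hβ.injOn ?_ ?_ ?_ fun j _ => ?_
  · rw [degree_nodal, card_univ, Fintype.card_fin]
  · rw [degree_nodal, degree_add_eq_left_of_degree_lt hlt, degree_X_pow, card_univ,
      Fintype.card_fin]
  · rw [nodal_monic, ((monic_X_pow q).add_of_left hlt).leadingCoeff]
  · simp [eval_nodal_at_node (mem_univ j), hroot j]

theorem sum_pow_eq_zero_of_pow_add_mul_eq_zero (hqK : (q : K) = 0) (hμ : μ ≠ 0) (hβ : Injective β)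
    (hroot : ∀ j, β j ^ q + μ * β j = 0) {l : ℕ} (hl : l + 1 < q) : ∑ j, β j ^ l = 0 := by
  have hweight : ∀ j, nodalWeight univ β j = μ⁻¹ := fun j => by
    rw [nodalWeight_eq_eval_derivative_nodal (mem_univ j),
      nodal_eq_X_pow_add_C_mul_X (by omega) hβ hroot]
    simp [derivative_X_pow, hqK]
  have := sum_nodalWeight_mul_pow_eq_zero (s := univ) hβ.injOn (k := l) (by simpa using hl)
  simpa [hweight, ← mul_sum, hμ] using this

end AdditivePolynomial

section DualCode

variable {K ι : Type*} [Field K]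

theorem finrank_map_mulLeft {a : ι → K} (ha : ∀ i, a i ≠ 0) (C : Submodule K (ι → K)) :
    finrank K (C.map (LinearMap.mulLeft K a)) = finrank K C := by
  have hinj : Injective (LinearMap.mulLeft K a) :=
    (Pi.isUnit_iff.mpr fun i => (ha i).isUnit).mul_right_injective
  exact (Submodule.equivMapOfInjective _ hinj C).finrank_eq.symm

variable [Fintype ι] [DecidableEq ι]

def dualCode (C : Submodule K (ι → K)) : Submodule K (ι → K) :=
  C.dualAnnihilator.comap (dotProductEquiv K ι).toLinearMap

theorem mem_dualCode {C : Submodule K (ι → K)} {v : ι → K} :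
    v ∈ dualCode C ↔ ∀ u ∈ C, v ⬝ᵥ u = 0 :=
  Submodule.mem_dualAnnihilator _

theorem finrank_add_finrank_dualCode (C : Submodule K (ι → K)) :
    finrank K C + finrank K (dualCode C) = Fintype.card ι := by
  rw [dualCode, Submodule.comap_equiv_eq_map_symm, LinearEquiv.finrank_map_eq,
    Subspace.finrank_add_finrank_dualAnnihilator_eq, finrank_fintype_fun_eq_card]

theorem span_le_dualCode_span {S T : Set (ι → K)} (h : ∀ s ∈ S, ∀ t ∈ T, s ⬝ᵥ t = 0) :
    Submodule.span K S ≤ dualCode (Submodule.span K T) := by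
  refine Submodule.span_le.mpr fun s hs => mem_dualCode.mpr fun u hu => ?_
  induction hu using Submodule.span_induction with
  | mem t ht => exact h s hs t ht
  | zero => exact dotProduct_zero s
  | add x y _ _ hx hy => rw [dotProduct_add, hx, hy, add_zero]
  | smul c x _ hx => rw [dotProduct_smul, hx, smul_zero]

end DualCode

/-- `x` and `y` have pole orders `q` and `m` at `Q∞`, so this is the pole order of `xⁱ yʲ`. -/
def poleOrder {m q : ℕ} (ij : Fin m × Fin q) : ℕ := ij.1 * q + ij.2 * m

theorem mul_le_card_poleOrder_le_add_card {m q r r' : ℕ}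
    (h : (m - 1) * q + (q - 1) * m ≤ r + r' + 1) :
    m * q ≤
      #{ij : Fin m × Fin q | poleOrder ij ≤ r} + #{ij : Fin m × Fin q | poleOrder ij ≤ r'} := by
  have hrev : ∀ ij : Fin m × Fin q,
      poleOrder (ij.1.rev, ij.2.rev) + poleOrder ij = (m - 1) * q + (q - 1) * m := by
    rintro ⟨i, j⟩
    have hi : (i.rev : ℕ) + i = m - 1 := by rw [Fin.val_rev]; omega
    have hj : (j.rev : ℕ) + j = q - 1 := by rw [Fin.val_rev]; omega
    simp only [poleOrder, ← hi, ← hj]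
    ring
  have hhigh :
      #{ij : Fin m × Fin q | ¬poleOrder ij ≤ r} ≤ #{ij : Fin m × Fin q | poleOrder ij ≤ r'} := by
    refine card_le_card_of_injOn (fun ij => (ij.1.rev, ij.2.rev)) (fun ij hij => ?_) ?_
    · simp only [coe_filter, mem_univ, true_and, Set.mem_ofPred_eq] at hij ⊢
      have := hrev ij
      omega
    · rintro ⟨i, j⟩ - ⟨i', j'⟩ - h
      simp_all
  have := card_filter_add_card_filter_not (s := univ) fun ij : Fin m × Fin q =>
    poleOrder ij ≤ r
  simp only [card_univ, Fintype.card_prod, Fintype.card_fin] at this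
  omega

section OnePointCode

variable {K : Type*} [Field K] {m q : ℕ} {α : Fin m → K} {β : Fin q → K}

theorem linearIndependent_pow_mul_pow (hα : Injective α) (hβ : Injective β) :
    LinearIndependent K fun ij : Fin m × Fin q =>
      fun P : Fin m × Fin q => α P.1 ^ (ij.1 : ℕ) * β P.2 ^ (ij.2 : ℕ) := by
  have hdet :
      (Matrix.kroneckerMap (· * ·) (Matrix.vandermonde α) (Matrix.vandermonde β)).det ≠ 0 := by
    rw [Matrix.det_kronecker]
    exact mul_ne_zero (pow_ne_zero _ (Matrix.det_vandermonde_ne_zero_iff.mpr hα))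
      (pow_ne_zero _ (Matrix.det_vandermonde_ne_zero_iff.mpr hβ))
  exact Matrix.linearIndependent_cols_of_det_ne_zero hdet

theorem card_poleOrder_le_finrank_onePointCode (hα : Injective α) (hβ : Injective β) (r : ℕ) :
    #{ij : Fin m × Fin q | poleOrder ij ≤ r} ≤ finrank K (onePointCode q m α β r) := by
  set S : Finset (Fin m × Fin q) := {ij : Fin m × Fin q | poleOrder ij ≤ r}
  have hli := (linearIndependent_pow_mul_pow hα hβ).comp ((↑) : S → Fin m × Fin q)
    Subtype.val_injective
  rw [← Fintype.card_coe, ← finrank_span_eq_card hli]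
  refine Submodule.finrank_mono (Submodule.span_le.mpr ?_)
  rintro _ ⟨⟨⟨i, j⟩, hij⟩, rfl⟩
  exact Submodule.subset_span ⟨i, j, by omega, (mem_filter.mp hij).2, rfl⟩

theorem dotProduct_pow_mul_pow {ι κ : Type*} [Fintype ι] [Fintype κ] (w α : ι → K) (β : κ → K)
    (a b i j : ℕ) :
    ((fun P : ι × κ => w P.1) * fun P => α P.1 ^ a * β P.2 ^ b) ⬝ᵥ
        (fun P => α P.1 ^ i * β P.2 ^ j) =
      (∑ u, w u * α u ^ (a + i)) * ∑ v, β v ^ (b + j) := by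
  simp only [dotProduct, Fintype.sum_prod_type, sum_mul_sum, Pi.mul_apply, pow_add]
  refine sum_congr rfl fun u _ => sum_congr rfl fun v _ => ?_
  ring

theorem map_mulLeft_onePointCode_le_dualCode (hα : Injective α) (hqK : (q : K) = 0) {μ : K}
    (hμ : μ ≠ 0) (hβ : Injective β) (hroot : ∀ j, β j ^ q + μ * β j = 0) {r r' : ℕ}
    (h : r + r' < (m - 1) * q + (q - 1) * m) :
    (onePointCode q m α β r').map (LinearMap.mulLeft K fun P => Lagrange.nodalWeight univ α P.1) ≤
      dualCode (onePointCode q m α β r) := by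
  rw [onePointCode, onePointCode, Submodule.map_span]
  refine span_le_dualCode_span ?_
  rintro _ ⟨_, ⟨a, b, -, hab, rfl⟩, rfl⟩ _ ⟨i, j, -, hij, rfl⟩
  rw [LinearMap.mulLeft_apply, dotProduct_pow_mul_pow]
  have hsmall : a + i + 1 < m ∨ b + j + 1 < q := by
    by_contra! hlarge
    have hα' : (m - 1) * q ≤ (a + i) * q := Nat.mul_le_mul_right q (by omega)
    have hβ' : (q - 1) * m ≤ (b + j) * m := Nat.mul_le_mul_right m (by omega)
    have : (a + i) * q + (b + j) * m ≤ r + r' := by nlinarith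
    omega
  rcases hsmall with hsmall | hsmall
  · rw [Lagrange.sum_nodalWeight_mul_pow_eq_zero hα.injOn (by simpa using hsmall), zero_mul]
  · rw [sum_pow_eq_zero_of_pow_add_mul_eq_zero hqK hμ hβ hroot hsmall, mul_zero]

theorem finrank_dualCode_onePointCode_le (hα : Injective α) (hβ : Injective β) {r r' : ℕ}
    (h : (m - 1) * q + (q - 1) * m ≤ r + r' + 1) :
    finrank K (dualCode (onePointCode q m α β r)) ≤ finrank K (onePointCode q m α β r') := by
  have hdual := finrank_add_finrank_dualCode (onePointCode q m α β r)
  have hr := card_poleOrder_le_finrank_onePointCode hα hβ r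
  have hr' := card_poleOrder_le_finrank_onePointCode hα hβ r'
  have hcount := mul_le_card_poleOrder_le_add_card h
  simp only [Fintype.card_prod, Fintype.card_fin] at hdual
  omega

end OnePointCode

open Polynomial in
theorem onePointCode_dual_general {K : Type*} [Field K]
    (p t : ℕ) (hp : p.Prime) [CharP K p] (q : ℕ) (hq : q = p ^ t) (ht : 1 ≤ t)
    (m : ℕ) (hm : 2 ≤ m) (μ : K) (hμ : μ ≠ 0)
    (α : Fin m → K) (hα : Function.Injective α)
    (β : Fin q → K) (hβ : Function.Injective β) (hroot : ∀ j, β j ^ q + μ * β j = 0)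
    (f : K[X]) (hf : f = ∏ u, (X - C (α u)))
    (r : ℕ) (hr : r ≤ 2 * q * m - q - m - 1) :
    {v : Fin m × Fin q → K | ∀ u ∈ onePointCode q m α β r, ∑ P, v P * u P = 0} =
      {v : Fin m × Fin q → K | ∃ c ∈ onePointCode q m α β (2 * q * m - q - m - 1 - r),
        v = fun P => ((derivative f).eval (α P.1))⁻¹ * c P} := by
  have hq1 : 1 ≤ q := hq ▸ Nat.one_le_pow _ _ hp.pos
  have hqK : (q : K) = 0 := by
    rw [hq, Nat.cast_pow, CharP.cast_eq_zero, zero_pow (by omega)]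
  have hsum : r + (2 * q * m - q - m - 1 - r) + 1 = (m - 1) * q + (q - 1) * m := by
    have h1 : (m - 1) * q = m * q - q := Nat.sub_one_mul m q
    have h2 : (q - 1) * m = m * q - m := by rw [Nat.sub_one_mul, mul_comm]
    have h3 : 2 * q * m = 2 * (m * q) := by ring
    have h4 : 2 * q ≤ m * q := Nat.mul_le_mul_right q hm
    have h5 : m ≤ m * q := Nat.le_mul_of_pos_right m hq1
    omega
  set r' := 2 * q * m - q - m - 1 - r
  have hweight : ∀ u, ((derivative f).eval (α u))⁻¹ = Lagrange.nodalWeight univ α u := by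
    intro u
    rw [hf, ← Lagrange.nodal_eq, Lagrange.nodalWeight_eq_eval_derivative_nodal (mem_univ u)]
  have hle := map_mulLeft_onePointCode_le_dualCode (r := r) (r' := r') hα hqK hμ hβ hroot
    (by omega)
  have hfin := finrank_dualCode_onePointCode_le hα hβ hsum.ge
  have hmap := finrank_map_mulLeft
    (fun P : Fin m × Fin q => Lagrange.nodalWeight_ne_zero hα.injOn (mem_univ P.1))
    (onePointCode q m α β r')
  have hdual := Submodule.eq_of_le_of_finrank_le hle (hfin.trans hmap.ge)
  ext v
  change (∀ u ∈ _, v ⬝ᵥ u = 0) ↔ _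
  rw [← mem_dualCode, ← hdual, Set.mem_ofPred_eq, Submodule.mem_map]
  simp only [hweight, eq_comm (a := v)]
  rfl

open Polynomial in
/-- Duality for the one-point codes `C_r` on `y^q + μy = f(x)`:
`C_r^⊥ = ā ⋆ C_{2qm-q-m-1-r}` where `ā⁻¹ = (f'(x)(P))_{P ∈ supp D}`, i.e. the Euclidean
dual of `C_r` consists exactly of the coordinatewise rescalings by `(f'(α))⁻¹` of the
words of `C_{2qm-q-m-1-r}`. -/
theorem onePointCode_dual {K : Type*} [Field K] [Fintype K]
    (p t : ℕ) (hp : p.Prime) [CharP K p] (q : ℕ) (hq : q = p ^ t) (ht : 1 ≤ t)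
    (m : ℕ) (hm : 2 ≤ m) (hmp : ¬ p ∣ m) (μ : K) (hμ : μ ≠ 0)
    (α : Fin m → K) (hα : Function.Injective α)
    (β : Fin q → K) (hβ : Function.Injective β) (hroot : ∀ j, β j ^ q + μ * β j = 0)
    (f : K[X]) (hf : f = ∏ u, (X - C (α u)))
    (r : ℕ) (hr : r ≤ 2 * q * m - q - m - 1) :
    {v : Fin m × Fin q → K | ∀ u ∈ onePointCode q m α β r, ∑ P, v P * u P = 0} =
      {v : Fin m × Fin q → K | ∃ c ∈ onePointCode q m α β (2 * q * m - q - m - 1 - r),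
        v = fun P => ((derivative f).eval (α P.1))⁻¹ * c P} :=
  onePointCode_dual_general p t hp q hq ht m hm μ hμ α hα β hβ hroot f hf r hr
end

section
/- Let q, m ≥ 2 be coprime. If 1 ≤ r < qm and r (or qm − r) is of the form iq with 0 ≤ i, or jm with 0 ≤ j ≤ q−1 (with the other coordinate zero), then the minimum distance of the one-point code C_r = C_L(D, rQ_∞) is exactly qm − r. -/
/-!
Every codeword of `C_r` is the evaluation on the grid `α × β` of a polynomial `F(x, y)` all of
whose monomials `xⁱyʲ` satisfy `j ≤ q - 1` and `iq + jm ≤ r`. Let `c(x) yᵉ` be the leading term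
of `F` in `y` and `d = deg c`. Then `c` vanishes at no more than `d` of the `αₐ`, and on every
other column `x = αₐ` the polynomial `F` has at most `e` zeros, so `F` has at most
`dq + em ≤ r` zeros on the grid.

The bound is attained when `q ∣ r` or `m ∣ r`, which is what (*) for `r` or for `qm - r` amounts
to: a product of `r / q` factors `x - αₐ` (resp. `r / m` factors `y - βᵦ`) lies in `L(rQ∞)` and
vanishes at exactly `r` points of the grid.
-/

open Finset Polynomial

section HammingNorm

variable {ι κ M : Type*} [Fintype ι] [Fintype κ] [Zero M] [DecidableEq M]

theorem hammingNorm_comp_fst (f : ι → M) :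
    hammingNorm (fun P : ι × κ => f P.1) = hammingNorm f * Fintype.card κ := by
  rw [hammingNorm, hammingNorm, ← univ_product_univ, filter_product_left (fun a => f a ≠ 0),
    card_product, card_univ]

theorem hammingNorm_comp_snd (f : κ → M) :
    hammingNorm (fun P : ι × κ => f P.2) = Fintype.card ι * hammingNorm f := by
  rw [hammingNorm, hammingNorm, ← univ_product_univ, filter_product_right (fun b => f b ≠ 0),
    card_product, card_univ]

end HammingNorm

theorem eval_comp_eq_sum_smul_pow {R ι : Type*} [Semiring R] (g : R[X]) (f : ι → R) :
    (fun a => g.eval (f a)) =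
      ∑ n ∈ range (g.natDegree + 1), g.coeff n • fun a => f a ^ n := by
  ext a
  simp [eval_eq_sum_range]

section Univariate

variable {K ι : Type*} [Field K] [DecidableEq K] [Fintype ι] {γ : ι → K}

theorem card_filter_eval_eq_zero_le_natDegree (hγ : Function.Injective γ) {g : K[X]}
    (hg : g ≠ 0) : #{a | g.eval (γ a) = 0} ≤ g.natDegree := by
  rw [← card_image_of_injective _ hγ]
  refine card_le_degree_of_subset_roots fun x hx => ?_
  obtain ⟨a, ha, rfl⟩ := mem_image.mp hx
  exact (mem_roots hg).2 (mem_filter.mp ha).2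

theorem exists_natDegree_eq_hammingNorm_eval_eq (hγ : Function.Injective γ) (S : Finset ι) :
    ∃ g : K[X], g.natDegree = #S ∧
      hammingNorm (fun a => g.eval (γ a)) = Fintype.card ι - #S := by
  classical
  refine ⟨∏ b ∈ S, (X - C (γ b)), natDegree_finsetProd_X_sub_C_eq_card S γ, ?_⟩
  have hzero : ∀ a, (∏ b ∈ S, (X - C (γ b))).eval (γ a) = 0 ↔ a ∈ S := fun a => by
    simp [eval_prod, prod_eq_zero_iff, sub_eq_zero, hγ.eq_iff]
  rw [hammingNorm, ← card_compl]
  congr 1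
  ext a
  simp [hzero]

end Univariate

section Bivariate

variable {K ι κ : Type*} [Field K] [DecidableEq K] [Fintype ι] [Fintype κ]
  {α : ι → K} {β : κ → K}

theorem card_filter_evalEval_eq_zero_le_natDegree (hβ : Function.Injective β) {F : K[X][X]}
    {x : K} (hx : F.leadingCoeff.eval x ≠ 0) :
    #{b | F.evalEval x (β b) = 0} ≤ F.natDegree := by
  have hcoeff : (F.map (evalRingHom x)).coeff F.natDegree = F.leadingCoeff.eval x := by
    rw [coeff_map, coe_evalRingHom, leadingCoeff]
  have hne : F.map (evalRingHom x) ≠ 0 := fun h => hx (by rw [← hcoeff, h, coeff_zero])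
  simp_rw [← map_evalRingHom_eval]
  exact (card_filter_eval_eq_zero_le_natDegree hβ hne).trans natDegree_map_le

theorem card_filter_evalEval_eq_zero_le (hα : Function.Injective α)
    (hβ : Function.Injective β) {F : K[X][X]} (hF : F ≠ 0) :
    #{P : ι × κ | F.evalEval (α P.1) (β P.2) = 0} ≤
      F.leadingCoeff.natDegree * Fintype.card κ + Fintype.card ι * F.natDegree := by
  have hlc : F.leadingCoeff ≠ 0 := leadingCoeff_ne_zero.mpr hF
  have hcolumn : ∀ a, #{b | F.evalEval (α a) (β b) = 0} ≤
      (if F.leadingCoeff.eval (α a) = 0 then Fintype.card κ else 0) + F.natDegree := by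
    intro a
    split_ifs with h
    · exact (card_filter_le _ _).trans (le_add_right (card_univ (α := κ)).le)
    · exact (card_filter_evalEval_eq_zero_le_natDegree hβ h).trans (le_add_left le_rfl)
  calc #{P : ι × κ | F.evalEval (α P.1) (β P.2) = 0}
      = ∑ a, #{b | F.evalEval (α a) (β b) = 0} := by
        simp only [card_filter, Fintype.sum_prod_type]
    _ ≤ ∑ a, ((if F.leadingCoeff.eval (α a) = 0 then Fintype.card κ else 0) + F.natDegree) :=
        sum_le_sum fun a _ => hcolumn a
    _ = #{a | F.leadingCoeff.eval (α a) = 0} * Fintype.card κ +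
          Fintype.card ι * F.natDegree := by
        simp [sum_add_distrib, sum_ite, sum_const]
    _ ≤ F.leadingCoeff.natDegree * Fintype.card κ + Fintype.card ι * F.natDegree := by
        gcongr
        exact card_filter_eval_eq_zero_le_natDegree hα hlc

variable (α β) in
noncomputable def gridEval : K[X][X] →ₗ[K] (ι × κ → K) where
  toFun F P := F.evalEval (α P.1) (β P.2)
  map_add' F G := funext fun _ => evalEval_add _ _ F G
  map_smul' c F := funext fun _ => evalEval_smul _ _ c F

end Bivariate

section OnePointCode

variable {K : Type*} [Field K] {q m r : ℕ} {α : Fin m → K} {β : Fin q → K}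

variable (K q m r) in
/-- `L(rQ∞)` as a space of polynomials: `F : K[X][X]` is read as a polynomial in `y` over `K[x]`,
so `(F.coeff j).coeff i` is the coefficient of `xⁱyʲ`. -/
def onePointPolys : Submodule K K[X][X] where
  carrier := {F | ∀ i j, (F.coeff j).coeff i ≠ 0 → j ≤ q - 1 ∧ i * q + j * m ≤ r}
  zero_mem' := by simp
  add_mem' {F G} hF hG i j h := by
    by_cases hFij : (F.coeff j).coeff i = 0
    · exact hG i j (by simpa [hFij] using h)
    · exact hF i j hFij
  smul_mem' c F hF i j h := hF i j (right_ne_zero_of_mul (by simpa using h))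

theorem monomial_mem_onePointPolys {i j : ℕ} (hj : j ≤ q - 1) (h : i * q + j * m ≤ r) :
    monomial j (X ^ i : K[X]) ∈ onePointPolys K q m r := by
  intro i' j' hne
  rw [coeff_monomial] at hne
  split_ifs at hne with hjj
  · rw [coeff_X_pow] at hne
    split_ifs at hne with hii
    · exact hjj ▸ hii ▸ ⟨hj, h⟩
    · exact absurd rfl hne
  · exact absurd rfl hne

theorem onePointCode_le_map_gridEval :
    onePointCode q m α β r ≤ (onePointPolys K q m r).map (gridEval α β) := by
  rw [onePointCode, Submodule.span_le]
  rintro _ ⟨i, j, hj, h, rfl⟩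
  exact ⟨_, monomial_mem_onePointPolys hj h,
    funext fun P => by simp [gridEval, evalEval, eval_monomial]⟩

theorem card_filter_gridEval_eq_zero_le [DecidableEq K] (hα : Function.Injective α)
    (hβ : Function.Injective β) {F : K[X][X]} (hF : F ∈ onePointPolys K q m r) (hF0 : F ≠ 0) :
    #{P | gridEval α β F P = 0} ≤ r := by
  have hlead : (F.coeff F.natDegree).coeff F.leadingCoeff.natDegree ≠ 0 :=
    leadingCoeff_ne_zero.mpr (leadingCoeff_ne_zero.mpr hF0)
  have hfootprint := (hF _ _ hlead).2
  have hzeros := card_filter_evalEval_eq_zero_le hα hβ hF0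
  simp only [Fintype.card_fin] at hzeros
  exact hzeros.trans (by linarith)

theorem le_hammingNorm_of_mem_onePointCode [DecidableEq K] (hα : Function.Injective α)
    (hβ : Function.Injective β) {v : Fin m × Fin q → K} (hv : v ∈ onePointCode q m α β r)
    (hv0 : v ≠ 0) : q * m - r ≤ hammingNorm v := by
  obtain ⟨F, hF, rfl⟩ := onePointCode_le_map_gridEval hv
  have hF0 : F ≠ 0 := by rintro rfl; exact hv0 (map_zero _)
  have hzeros := card_filter_gridEval_eq_zero_le hα hβ hF hF0
  have hsplit := card_filter_add_card_filter_not (s := univ) fun P => gridEval α β F P = 0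
  rw [card_univ, Fintype.card_prod, Fintype.card_fin, Fintype.card_fin] at hsplit
  simp only [hammingNorm, ne_eq]
  rw [mul_comm]
  omega

theorem monomial_mem_onePointCode {i j : ℕ} (hj : j ≤ q - 1) (h : i * q + j * m ≤ r) :
    (fun P : Fin m × Fin q => α P.1 ^ i * β P.2 ^ j) ∈ onePointCode q m α β r :=
  Submodule.subset_span ⟨i, j, hj, h, rfl⟩

theorem eval_fst_mem_onePointCode {g : K[X]} (h : g.natDegree * q ≤ r) :
    (fun P : Fin m × Fin q => g.eval (α P.1)) ∈ onePointCode q m α β r := by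
  rw [eval_comp_eq_sum_smul_pow g fun P : Fin m × Fin q => α P.1]
  refine Submodule.sum_mem _ fun n hn => Submodule.smul_mem _ _ ?_
  have hn : n ≤ g.natDegree := Nat.lt_succ_iff.mp (mem_range.mp hn)
  simpa using monomial_mem_onePointCode (α := α) (β := β) (j := 0) (Nat.zero_le _)
    (by nlinarith)

theorem eval_snd_mem_onePointCode {g : K[X]} (hq : g.natDegree ≤ q - 1)
    (h : g.natDegree * m ≤ r) :
    (fun P : Fin m × Fin q => g.eval (β P.2)) ∈ onePointCode q m α β r := by
  rw [eval_comp_eq_sum_smul_pow g fun P : Fin m × Fin q => β P.2]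
  refine Submodule.sum_mem _ fun n hn => Submodule.smul_mem _ _ ?_
  have hn : n ≤ g.natDegree := Nat.lt_succ_iff.mp (mem_range.mp hn)
  simpa using monomial_mem_onePointCode (α := α) (β := β) (i := 0) (hn.trans hq)
    (by nlinarith)

theorem exists_mem_onePointCode_hammingNorm_eq_of_dvd_left [DecidableEq K]
    (hα : Function.Injective α) (hdvd : q ∣ r) (hr : r ≤ q * m) :
    ∃ v ∈ onePointCode q m α β r, hammingNorm v = q * m - r := by
  obtain ⟨S, -, hS⟩ : ∃ S ⊆ (univ : Finset (Fin m)), #S = r / q :=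
    le_card_iff_exists_subset_card.mp (by simpa using Nat.div_le_of_le_mul hr)
  obtain ⟨g, hdeg, hwt⟩ := exists_natDegree_eq_hammingNorm_eval_eq hα S
  refine ⟨fun P => g.eval (α P.1), eval_fst_mem_onePointCode ?_, ?_⟩
  · rw [hdeg, hS, Nat.div_mul_cancel hdvd]
  · rw [hammingNorm_comp_fst (κ := Fin q) fun a => g.eval (α a), hwt, hS, Fintype.card_fin,
      Fintype.card_fin, Nat.sub_mul, Nat.div_mul_cancel hdvd, mul_comm]

theorem exists_mem_onePointCode_hammingNorm_eq_of_dvd_right [DecidableEq K]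
    (hβ : Function.Injective β) (hdvd : m ∣ r) (hr : r < q * m) :
    ∃ v ∈ onePointCode q m α β r, hammingNorm v = q * m - r := by
  have hm : 0 < m := Nat.pos_of_ne_zero (by rintro rfl; simp at hr)
  have hlt : r / m < q := (Nat.div_lt_iff_lt_mul hm).mpr hr
  obtain ⟨S, -, hS⟩ : ∃ S ⊆ (univ : Finset (Fin q)), #S = r / m :=
    le_card_iff_exists_subset_card.mp (by simpa using hlt.le)
  obtain ⟨g, hdeg, hwt⟩ := exists_natDegree_eq_hammingNorm_eval_eq hβ S
  refine ⟨fun P => g.eval (β P.2), eval_snd_mem_onePointCode (by omega) ?_, ?_⟩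
  · rw [hdeg, hS, Nat.div_mul_cancel hdvd]
  · rw [hammingNorm_comp_snd (ι := Fin m) fun b => g.eval (β b), hwt, hS, Fintype.card_fin,
      Fintype.card_fin, Nat.mul_sub, Nat.mul_div_cancel' hdvd, mul_comm]

end OnePointCode

open Finset in
theorem onePointCode_minDist_general {K : Type*} [Field K] [DecidableEq K]
    (q : ℕ) (m : ℕ)
    (α : Fin m → K) (hα : Function.Injective α)
    (β : Fin q → K) (hβ : Function.Injective β)
    (r : ℕ) (hr2 : r < q * m)
    (hstar : ((∃ i : ℕ, r = i * q) ∨ (∃ j : ℕ, j ≤ q - 1 ∧ r = j * m)) ∨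
      ((∃ i : ℕ, q * m - r = i * q) ∨ (∃ j : ℕ, j ≤ q - 1 ∧ q * m - r = j * m))) :
    (∀ v ∈ onePointCode q m α β r, v ≠ 0 →
        q * m - r ≤ (univ.filter fun P => v P ≠ 0).card) ∧
      (∃ v ∈ onePointCode q m α β r,
        (univ.filter fun P => v P ≠ 0).card = q * m - r) := by
  have hdvd : q ∣ r ∨ m ∣ r := by
    rcases hstar with (⟨i, hi⟩ | ⟨j, -, hj⟩) | (⟨i, hi⟩ | ⟨j, -, hj⟩)
    · exact .inl (Dvd.intro_left i hi.symm)
    · exact .inr (Dvd.intro_left j hj.symm)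
    · exact .inl ((Nat.dvd_sub_iff_right hr2.le (dvd_mul_right q m)).mp
        (Dvd.intro_left i hi.symm))
    · exact .inr ((Nat.dvd_sub_iff_right hr2.le (dvd_mul_left m q)).mp
        (Dvd.intro_left j hj.symm))
  refine ⟨fun v hv hv0 => le_hammingNorm_of_mem_onePointCode hα hβ hv hv0, ?_⟩
  rcases hdvd with hq | hm
  · exact exists_mem_onePointCode_hammingNorm_eq_of_dvd_left hα hq hr2.le
  · exact exists_mem_onePointCode_hammingNorm_eq_of_dvd_right hβ hm hr2

open Finset in
/-- If `1 ≤ r < qm` and `r` (or `qm - r`) has property (*) — i.e. it is of the form `iq`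
with `i ≥ 0`, or `jm` with `0 ≤ j ≤ q - 1` — then the minimum distance of the one-point
code `C_r` is exactly `qm - r`: every nonzero codeword has Hamming weight `≥ qm - r`,
and some codeword has weight exactly `qm - r`. -/
theorem onePointCode_minDist {K : Type*} [Field K] [Fintype K] [DecidableEq K]
    (p t : ℕ) (hp : p.Prime) [CharP K p] (q : ℕ) (hq : q = p ^ t) (ht : 1 ≤ t)
    (m : ℕ) (hm : 2 ≤ m) (hmp : ¬ p ∣ m) (hco : Nat.Coprime q m)
    (μ : K) (hμ : μ ≠ 0)
    (α : Fin m → K) (hα : Function.Injective α)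
    (β : Fin q → K) (hβ : Function.Injective β) (hroot : ∀ j, β j ^ q + μ * β j = 0)
    (r : ℕ) (hr1 : 1 ≤ r) (hr2 : r < q * m)
    (hstar : ((∃ i : ℕ, r = i * q) ∨ (∃ j : ℕ, j ≤ q - 1 ∧ r = j * m)) ∨
      ((∃ i : ℕ, q * m - r = i * q) ∨ (∃ j : ℕ, j ≤ q - 1 ∧ q * m - r = j * m))) :
    (∀ v ∈ onePointCode q m α β r, v ≠ 0 →
        q * m - r ≤ (univ.filter fun P => v P ≠ 0).card) ∧
      (∃ v ∈ onePointCode q m α β r,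
        (univ.filter fun P => v P ≠ 0).card = q * m - r) :=
  onePointCode_minDist_general q m α hα β hβ r hr2 hstar
end
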